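/- arXiv:2306.01238 — 3 statements merged into one kernel-verified Lean document; each statement's English description precedes it below -/
import Mathlib

section
/- For all real ξ₁, ξ₂ and natural number m: ∫_{-∞}^{+∞} e^{-η²} H_m(η+ξ₁) H_m(η+ξ₂) dη = 2^m m! √π L_m(-2ξ₁ξ₂), where H_m is the m-th (physicists') Hermite polynomial and L_m the m-th Laguerre polynomial. -/
/-!
Taylor expansion together with `H_k' = 2k H_{k-1}` gives the addition formula
`H_m(η + ξ) = ∑_j C(m,j) (2ξ)^{m-j} H_j(η)`. Since `e^{-x²} H_{j+1} = -(e^{-x²} H_j)'`, repeated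
Gaussian integration by parts gives `∫ e^{-x²} H_j p = ∫ e^{-x²} p^{(j)}` for every polynomial `p`,
hence the orthogonality relations `∫ e^{-x²} H_j H_k = δ_{jk} 2^k k! √π`. Expanding both factors,
the integral collapses to `√π ∑_j C(m,j)² (4ξ₁ξ₂)^{m-j} 2^j j!`, which is `2^m m! √π L_m(-2ξ₁ξ₂)`.
-/

open MeasureTheory

/-- The physicists' Hermite polynomials, via the standard recurrence
H₀ = 1, H₁(x) = 2x, H_{n+2}(x) = 2x H_{n+1}(x) - 2(n+1) H_n(x). -/
noncomputable def hermiteP : ℕ → ℝ → ℝ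
  | 0, _ => 1
  | 1, x => 2 * x
  | (n + 2), x => 2 * x * hermiteP (n + 1) x - 2 * (n + 1) * hermiteP n x

noncomputable def laguerre (n : ℕ) (x : ℝ) : ℝ :=
  ∑ k ∈ Finset.range (n + 1), (n.choose k : ℝ) * (-x) ^ k / (Nat.factorial k : ℝ)

open Polynomial

noncomputable def physHermite : ℕ → ℝ[X]
  | 0 => 1
  | 1 => 2 * X
  | (n + 2) => 2 * X * physHermite (n + 1) - (2 * (n + 1) : ℝ) • physHermite n

theorem eval_physHermite : ∀ (n : ℕ) (x : ℝ), (physHermite n).eval x = hermiteP n x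
  | 0, x => by simp [physHermite, hermiteP]
  | 1, x => by simp [physHermite, hermiteP]
  | n + 2, x => by
    simp [physHermite, hermiteP, eval_physHermite (n + 1), eval_physHermite n]

theorem natDegree_physHermite_le : ∀ n : ℕ, (physHermite n).natDegree ≤ n
  | 0 => by simp [physHermite]
  | 1 => by simp only [physHermite]; compute_degree
  | n + 2 => by
    have h₁ : (2 * X * physHermite (n + 1)).natDegree ≤ n + 2 :=
      natDegree_mul_le_of_le (by compute_degree) (natDegree_physHermite_le (n + 1)) |>.trans
        (by omega)
    have h₂ : ((2 * (n + 1) : ℝ) • physHermite n).natDegree ≤ n + 2 :=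
      (natDegree_smul_le _ _).trans ((natDegree_physHermite_le n).trans (by omega))
    rw [physHermite]
    exact (natDegree_sub_le_of_le h₁ h₂).trans (max_self _).le

theorem derivative_physHermite_succ :
    ∀ n : ℕ, derivative (physHermite (n + 1)) = (2 * (n + 1) : ℝ) • physHermite n
  | 0 => by simp [physHermite, smul_eq_C_mul, C_ofNat]
  | 1 => by simp [physHermite, smul_eq_C_mul, C_ofNat]; ring
  | n + 2 => by
    have h := derivative_physHermite_succ n
    have h' := derivative_physHermite_succ (n + 1)
    rw [physHermite, derivative_sub, derivative_mul, derivative_smul, h', h, physHermite]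
    simp only [derivative_mul, derivative_ofNat, derivative_X, smul_eq_C_mul]
    push_cast
    simp only [map_mul, map_add, map_ofNat, map_natCast, map_one]
    ring

theorem derivative_physHermite (n : ℕ) :
    derivative (physHermite n) = (2 * n : ℝ) • physHermite (n - 1) := by
  cases n with
  | zero => simp [physHermite]
  | succ n => simpa using derivative_physHermite_succ n

theorem physHermite_succ (n : ℕ) :
    physHermite (n + 1) = 2 * X * physHermite n - derivative (physHermite n) := by
  cases n with
  | zero => simp [physHermite]
  | succ n => rw [derivative_physHermite_succ]; rfl

theorem iterate_derivative_physHermite (j k : ℕ) :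
    derivative^[j] (physHermite k) = (2 ^ j * k.descFactorial j : ℝ) • physHermite (k - j) := by
  induction j with
  | zero => simp
  | succ j ih =>
    rw [Function.iterate_succ_apply', ih, derivative_smul, derivative_physHermite,
      Nat.descFactorial_succ, Nat.sub_sub, smul_smul]
    congr 1
    push_cast
    ring

theorem hasseDeriv_physHermite (j k : ℕ) :
    hasseDeriv j (physHermite k) = (2 ^ j * k.choose j : ℝ) • physHermite (k - j) := by
  refine smul_right_injective ℝ[X] (Nat.factorial_ne_zero j) ?_
  dsimp only
  rw [← LinearMap.smul_apply, factorial_smul_hasseDeriv, iterate_derivative_physHermite,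
    Nat.descFactorial_eq_factorial_mul_choose, ← Nat.cast_smul_eq_nsmul ℝ, smul_smul]
  congr 1
  push_cast
  ring

theorem integrable_exp_neg_sq_mul_eval (p : ℝ[X]) :
    Integrable fun x : ℝ => Real.exp (-x ^ 2) * p.eval x := by
  induction p using Polynomial.induction_on' with
  | add p q hp hq =>
    simp only [eval_add, mul_add]
    exact hp.add hq
  | monomial n a =>
    have h := integrable_rpow_mul_exp_neg_mul_sq (b := 1) one_pos
      (s := n) (neg_one_lt_zero.trans_le n.cast_nonneg)
    simp only [Real.rpow_natCast, neg_mul, one_mul] at h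
    refine (h.const_mul a).congr (.of_forall fun x => ?_)
    simp only [eval_monomial]
    ring

noncomputable def gaussianIntegral : ℝ[X] →ₗ[ℝ] ℝ where
  toFun p := ∫ x : ℝ, Real.exp (-x ^ 2) * p.eval x
  map_add' p q := by
    simp only [eval_add, mul_add]
    exact integral_add (integrable_exp_neg_sq_mul_eval p) (integrable_exp_neg_sq_mul_eval q)
  map_smul' c p := by
    simp only [eval_smul, smul_eq_mul, mul_left_comm _ c, integral_const_mul, RingHom.id_apply]

theorem gaussianIntegral_apply (p : ℝ[X]) :
    gaussianIntegral p = ∫ x : ℝ, Real.exp (-x ^ 2) * p.eval x := rfl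

theorem gaussianIntegral_one : gaussianIntegral 1 = √Real.pi := by
  simpa [gaussianIntegral_apply] using integral_gaussian 1

theorem hasDerivAt_exp_neg_sq_mul_eval (p : ℝ[X]) (x : ℝ) :
    HasDerivAt (fun x : ℝ => Real.exp (-x ^ 2) * p.eval x)
      (Real.exp (-x ^ 2) * (derivative p - 2 * X * p).eval x) x := by
  have hexp : HasDerivAt (fun x : ℝ => Real.exp (-x ^ 2)) (Real.exp (-x ^ 2) * (-(2 * x))) x :=
    (Real.hasDerivAt_exp _).comp x ((hasDerivAt_pow 2 x).neg.congr_deriv (by ring))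
  refine (hexp.mul (p.hasDerivAt x)).congr_deriv ?_
  simp only [eval_sub, eval_mul, eval_ofNat, eval_X]
  ring

theorem gaussianIntegral_derivative (p : ℝ[X]) :
    gaussianIntegral (derivative p) = gaussianIntegral (2 * X * p) := by
  rw [← sub_eq_zero, ← map_sub, gaussianIntegral_apply]
  exact integral_eq_zero_of_hasDerivAt_of_integrable (hasDerivAt_exp_neg_sq_mul_eval p)
    (integrable_exp_neg_sq_mul_eval _) (integrable_exp_neg_sq_mul_eval p)

theorem gaussianIntegral_physHermite_mul (j : ℕ) (p : ℝ[X]) :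
    gaussianIntegral (physHermite j * p) = gaussianIntegral (derivative^[j] p) := by
  induction j generalizing p with
  | zero => simp [physHermite]
  | succ j ih =>
    have hparts := gaussianIntegral_derivative (physHermite j * p)
    rw [derivative_mul] at hparts
    rw [Function.iterate_succ_apply, ← ih, physHermite_succ, sub_mul, map_sub, mul_assoc, ← hparts,
      map_add, add_sub_cancel_left]

theorem gaussianIntegral_physHermite (n : ℕ) :
    gaussianIntegral (physHermite n) = if n = 0 then √Real.pi else 0 := by
  rw [← mul_one (physHermite n), gaussianIntegral_physHermite_mul]
  rcases n.eq_zero_or_pos with rfl | hn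
  · simp [gaussianIntegral_one]
  · simp [iterate_derivative_one hn, hn.ne']

theorem gaussianIntegral_physHermite_mul_physHermite (j k : ℕ) :
    gaussianIntegral (physHermite j * physHermite k) =
      if j = k then 2 ^ k * k.factorial * √Real.pi else 0 := by
  rw [gaussianIntegral_physHermite_mul, iterate_derivative_physHermite, map_smul,
    gaussianIntegral_physHermite, smul_eq_mul]
  rcases lt_trichotomy j k with hjk | rfl | hjk
  · simp [hjk.ne, Nat.sub_ne_zero_of_lt hjk]
  · simp [Nat.descFactorial_self]
  · simp [hjk.ne', Nat.descFactorial_eq_zero_iff_lt.mpr hjk]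

theorem gaussianIntegral_sum_smul_physHermite_mul_sum (n : ℕ) (a b : ℕ → ℝ) :
    gaussianIntegral ((∑ j ∈ Finset.range n, a j • physHermite j) *
        ∑ j ∈ Finset.range n, b j • physHermite j) =
      ∑ j ∈ Finset.range n, a j * b j * (2 ^ j * j.factorial * √Real.pi) := by
  simp only [Finset.sum_mul_sum, smul_mul_smul, map_sum, map_smul, smul_eq_mul,
    gaussianIntegral_physHermite_mul_physHermite, mul_ite, mul_zero]
  refine Finset.sum_congr rfl fun j hj => ?_
  rw [Finset.sum_ite_eq, if_pos hj, mul_assoc]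

theorem eval_add_eq_sum_hasseDeriv {R : Type*} [CommSemiring R] {f : R[X]} {n : ℕ}
    (hn : f.natDegree < n) (x y : R) :
    f.eval (x + y) = ∑ k ∈ Finset.range n, (hasseDeriv k f).eval x * y ^ k := by
  rw [add_comm, ← taylor_eval, eval_eq_sum_range' ((natDegree_taylor f x).trans_lt hn)]
  simp only [taylor_coeff]

theorem taylor_physHermite (m : ℕ) (y : ℝ) :
    taylor y (physHermite m) =
      ∑ j ∈ Finset.range (m + 1), (m.choose j * (2 * y) ^ (m - j) : ℝ) • physHermite j := by
  refine Polynomial.funext fun x => ?_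
  rw [taylor_eval, eval_add_eq_sum_hasseDeriv (Nat.lt_succ_of_le (natDegree_physHermite_le m)),
    eval_finsetSum, ← Finset.sum_range_reflect]
  refine Finset.sum_congr rfl fun j hj => ?_
  have hjm : j ≤ m := Nat.lt_succ_iff.mp (Finset.mem_range.mp hj)
  rw [Nat.succ_sub_one, hasseDeriv_physHermite, Nat.sub_sub_self hjm, Nat.choose_symm hjm,
    eval_smul, eval_smul, smul_eq_mul, smul_eq_mul]
  ring

theorem sum_choose_sq_mul_factorial_eq_laguerre (m : ℕ) (t : ℝ) :
    ∑ j ∈ Finset.range (m + 1), (m.choose j : ℝ) ^ 2 * (4 * t) ^ (m - j) * (2 ^ j * j.factorial) =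
      2 ^ m * m.factorial * laguerre m (-2 * t) := by
  rw [laguerre, Finset.mul_sum, ← Finset.sum_range_reflect]
  refine Finset.sum_congr rfl fun j hj => ?_
  have hjm : j ≤ m := Nat.lt_succ_iff.mp (Finset.mem_range.mp hj)
  have hfact : (m.choose j : ℝ) * j.factorial * (m - j).factorial = m.factorial := by
    exact_mod_cast Nat.choose_mul_factorial_mul_factorial hjm
  have hpow : (2 : ℝ) ^ j * 2 ^ (m - j) = 2 ^ m := by rw [← pow_add, Nat.add_sub_cancel' hjm]
  rw [Nat.succ_sub_one, Nat.sub_sub_self hjm, Nat.choose_symm hjm, ← hfact, ← hpow,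
    show (4 : ℝ) * t = 2 * -(-2 * t) by ring]
  generalize -(-2 * t) = u
  field_simp
  ring

/-- ∫_{-∞}^{∞} e^{-η²} H_m(η+ξ₁) H_m(η+ξ₂) dη
= 2^m m! √π L_m(-2ξ₁ξ₂). -/
theorem stmt_12 (m : ℕ) (ξ₁ ξ₂ : ℝ) :
    ∫ η : ℝ, Real.exp (-η ^ 2) * hermiteP m (η + ξ₁) * hermiteP m (η + ξ₂) =
      2 ^ m * (Nat.factorial m : ℝ) * Real.sqrt Real.pi * laguerre m (-2 * ξ₁ * ξ₂) := by
  have hpoly : ∀ η : ℝ, Real.exp (-η ^ 2) * hermiteP m (η + ξ₁) * hermiteP m (η + ξ₂) =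
      Real.exp (-η ^ 2) * (taylor ξ₁ (physHermite m) * taylor ξ₂ (physHermite m)).eval η := by
    intro η
    rw [eval_mul, taylor_eval, taylor_eval, eval_physHermite, eval_physHermite, mul_assoc]
  simp_rw [hpoly, ← gaussianIntegral_apply]
  rw [taylor_physHermite, taylor_physHermite, gaussianIntegral_sum_smul_physHermite_mul_sum,
    mul_assoc (-2 : ℝ), mul_right_comm _ √Real.pi, ← sum_choose_sq_mul_factorial_eq_laguerre,
    Finset.sum_mul]
  refine Finset.sum_congr rfl fun j _ => ?_
  rw [show (4 : ℝ) * (ξ₁ * ξ₂) = 2 * ξ₁ * (2 * ξ₂) by ring]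
  simp only [mul_pow]
  ring
end

section
/- For natural numbers m ≤ n and real x: ((-x)^m / m!) L_n^{(m-n)}(x) = ((-x)^n / n!) L_m^{(n-m)}(x), where L_k^{(α)} denotes the generalized (associated) Laguerre polynomial. -/
/-! For `α = N - k` with `N` natural, the falling-factorial coefficient of `L_k^{(α)}` is the
ordinary binomial `binom(N, k - j)`. Reflecting `j ↦ n - j` then gives
`(-x)^m/m! · L_n^{(m-n)}(x) = Σ_{i ≤ min(m,n)} (-x)^(m+n-i) / (i! (m-i)! (n-i)!)`,
which is symmetric in `m` and `n`. -/

/-- The generalized (associated) Laguerre polynomial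
`L_k^{(α)}(x) = Σ_{j=0}^k binom(k+α, k-j) (-x)^j / j!`, where for integer
(possibly negative) `α` the binomial coefficient `binom(k+α, k-j)` is
interpreted via the falling factorial `(k+α)(k+α-1)⋯(k+α-(k-j)+1)/(k-j)!`. -/
noncomputable def genLaguerre (k : ℕ) (α : ℤ) (x : ℝ) : ℝ :=
  ∑ j ∈ Finset.range (k + 1),
    ((∏ i ∈ Finset.range (k - j), ((k : ℝ) + (α : ℝ) - (i : ℝ))) /
        (Nat.factorial (k - j) : ℝ)) *
      ((-x) ^ j / (Nat.factorial j : ℝ))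

open Finset

theorem prod_range_natCast_sub_div_factorial (N k : ℕ) :
    (∏ i ∈ range k, ((N : ℝ) - i)) / (k.factorial : ℝ) = N.choose k := by
  rw [← descPochhammer_eval_eq_prod_range, descPochhammer_eval_eq_descFactorial,
    Nat.descFactorial_eq_factorial_mul_choose, Nat.cast_mul,
    mul_div_cancel_left₀ _ (by positivity)]

theorem genLaguerre_natCast_sub (k N : ℕ) (x : ℝ) :
    genLaguerre k ((N : ℤ) - k) x =
      ∑ j ∈ range (k + 1), (N.choose (k - j) : ℝ) * ((-x) ^ j / (j.factorial : ℝ)) := by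
  have hroot (i : ℕ) : (k : ℝ) + (((N : ℤ) - k : ℤ) : ℝ) - i = N - i := by push_cast; ring
  simp only [genLaguerre, hroot, prod_range_natCast_sub_div_factorial]

theorem neg_pow_div_factorial_mul_genLaguerre (m n : ℕ) (x : ℝ) :
    (-x) ^ m / (m.factorial : ℝ) * genLaguerre n ((m : ℤ) - n) x =
      ∑ i ∈ range (min m n + 1),
        (-x) ^ (m + n - i) / (i.factorial * (m - i).factorial * (n - i).factorial : ℝ) := by
  rw [genLaguerre_natCast_sub, ← sum_range_reflect, mul_sum]
  simp only [add_tsub_cancel_right]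
  refine (sum_subset (range_subset_range.2 (by omega)) ?_).symm.trans (sum_congr rfl ?_)
  · intro i hin hi
    simp only [mem_range] at hin hi
    rw [Nat.choose_eq_zero_of_lt (by omega)]
    simp
  · intro i hi
    simp only [mem_range] at hi
    rw [Nat.sub_sub_self (by omega), Nat.cast_choose ℝ (by omega : i ≤ m)]
    have hpow : (-x) ^ (m + n - i) = (-x) ^ m * (-x) ^ (n - i) := by
      rw [← pow_add]; congr 1; omega
    rw [hpow]
    field_simp

theorem stmt_13_general (m n : ℕ) (x : ℝ) :
    ((-x) ^ m / (Nat.factorial m : ℝ)) * genLaguerre n ((m : ℤ) - (n : ℤ)) x =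
      ((-x) ^ n / (Nat.factorial n : ℝ)) * genLaguerre m ((n : ℤ) - (m : ℤ)) x := by
  rw [neg_pow_div_factorial_mul_genLaguerre, neg_pow_div_factorial_mul_genLaguerre, min_comm,
    add_comm n]
  exact sum_congr rfl fun i _ => by rw [mul_right_comm]

/-- for m ≤ n, ((-x)^m/m!) L_n^{(m-n)}(x) = ((-x)^n/n!) L_m^{(n-m)}(x). -/
theorem stmt_13 (m n : ℕ) (hmn : m ≤ n) (x : ℝ) :
    ((-x) ^ m / (Nat.factorial m : ℝ)) * genLaguerre n ((m : ℤ) - (n : ℤ)) x =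
      ((-x) ^ n / (Nat.factorial n : ℝ)) * genLaguerre m ((n : ℤ) - (m : ℤ)) x :=
  stmt_13_general m n x
end

section
/- The star-eigenvalue ansatz for the harmonic oscillator: if f(x,p) = F(2(x²+p²)) with F(z) = e^{-z/2} L_n(z) and E = n + 1/2, then f satisfies both (x ∂f/∂p - p ∂f/∂x) = 0 and (p² + x²) f - (1/4)(∂²f/∂p² + ∂²f/∂x²) = 2E f. -/
private lemma aux_d1 (L : ℝ → ℝ) (hL : Differentiable ℝ L) (a q : ℝ) :
    HasDerivAt (fun t : ℝ => Real.exp (-(a + t ^ 2)) * L (2 * (a + t ^ 2)))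
      (Real.exp (-(a + q ^ 2)) *
        ((-(2 * q)) * L (2 * (a + q ^ 2)) + (4 * q) * deriv L (2 * (a + q ^ 2)))) q := by
  have h1 : HasDerivAt (fun t : ℝ => -(a + t ^ 2)) (-(2 * q)) q := by
    exact ((hasDerivAt_pow 2 q).const_add a).neg.congr_deriv (by norm_num)
  have h2 : HasDerivAt (fun t : ℝ => Real.exp (-(a + t ^ 2)))
      (Real.exp (-(a + q ^ 2)) * (-(2 * q))) q := h1.exp
  have h3 : HasDerivAt (fun t : ℝ => 2 * (a + t ^ 2)) (4 * q) q := by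
    have := ((hasDerivAt_pow 2 q).const_add a).const_mul (2 : ℝ)
    refine this.congr_deriv ?_
    ring
  have h4 : HasDerivAt (fun t : ℝ => L (2 * (a + t ^ 2)))
      (deriv L (2 * (a + q ^ 2)) * (4 * q)) q :=
    (hL (2 * (a + q ^ 2))).hasDerivAt.comp q h3
  have := h2.mul h4
  refine this.congr_deriv ?_
  ring

private lemma aux_d2 (L : ℝ → ℝ) (hL : ContDiff ℝ (⊤ : ℕ∞) L) (a q : ℝ) :
    HasDerivAt (fun t : ℝ => Real.exp (-(a + t ^ 2)) *
        ((-(2 * t)) * L (2 * (a + t ^ 2)) + (4 * t) * deriv L (2 * (a + t ^ 2))))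
      (Real.exp (-(a + q ^ 2)) *
        ((4 * q ^ 2 - 2) * L (2 * (a + q ^ 2)) +
         (4 - 16 * q ^ 2) * deriv L (2 * (a + q ^ 2)) +
         16 * q ^ 2 * deriv (deriv L) (2 * (a + q ^ 2)))) q := by
  have hL1 : Differentiable ℝ L := hL.differentiable (by simp)
  have hL'1 : Differentiable ℝ (deriv L) :=
    (contDiff_infty_iff_deriv.1 (hL.of_le (mod_cast le_top))).2.differentiable (by simp)
  have h1 : HasDerivAt (fun t : ℝ => -(a + t ^ 2)) (-(2 * q)) q := by
    exact ((hasDerivAt_pow 2 q).const_add a).neg.congr_deriv (by norm_num)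
  have h2 : HasDerivAt (fun t : ℝ => Real.exp (-(a + t ^ 2)))
      (Real.exp (-(a + q ^ 2)) * (-(2 * q))) q := h1.exp
  have h3 : HasDerivAt (fun t : ℝ => 2 * (a + t ^ 2)) (4 * q) q := by
    have := ((hasDerivAt_pow 2 q).const_add a).const_mul (2 : ℝ)
    refine this.congr_deriv ?_
    ring
  have h4 : HasDerivAt (fun t : ℝ => L (2 * (a + t ^ 2)))
      (deriv L (2 * (a + q ^ 2)) * (4 * q)) q :=
    (hL1 (2 * (a + q ^ 2))).hasDerivAt.comp q h3
  have h5 : HasDerivAt (fun t : ℝ => deriv L (2 * (a + t ^ 2)))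
      (deriv (deriv L) (2 * (a + q ^ 2)) * (4 * q)) q :=
    by have h := (hL'1 (2 * (a + q ^ 2))).hasDerivAt.comp q h3; exact h
  have h6 : HasDerivAt (fun t : ℝ => (-(2 * t)) * L (2 * (a + t ^ 2)))
      ((-2) * L (2 * (a + q ^ 2)) +
        (-(2 * q)) * (deriv L (2 * (a + q ^ 2)) * (4 * q))) q := by
    have ht : HasDerivAt (fun t : ℝ => -(2 * t)) (-2) q := by
      exact ((hasDerivAt_id q).const_mul 2 |>.neg).congr_deriv (by simp)
    exact ht.mul h4
  have h7 : HasDerivAt (fun t : ℝ => (4 * t) * deriv L (2 * (a + t ^ 2)))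
      (4 * deriv L (2 * (a + q ^ 2)) +
        (4 * q) * (deriv (deriv L) (2 * (a + q ^ 2)) * (4 * q))) q := by
    have ht : HasDerivAt (fun t : ℝ => 4 * t) (4 : ℝ) q := by
      simpa using (hasDerivAt_id q).const_mul 4
    exact ht.mul h5
  have := h2.mul (h6.add h7)
  refine this.congr_deriv ?_
  simp only [Pi.add_apply]
  ring

/-- if L is smooth and satisfies the Laguerre ODE
z L'' + (1-z) L' + n L = 0, then f(x,p) = e^{-(x²+p²)} L(2(x²+p²))
(i.e. f = F(2(x²+p²)) with F(z) = e^{-z/2}L(z)) satisfies, with E = n + 1/2,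
both star-eigenvalue equations: x ∂f/∂p - p ∂f/∂x = 0 and
(p²+x²) f - (1/4)(∂²f/∂p² + ∂²f/∂x²) = 2E f. -/
theorem stmt_14 (n : ℕ) (L : ℝ → ℝ) (hL : ContDiff ℝ (⊤ : ℕ∞) L)
    (hode : ∀ z : ℝ,
      z * deriv (deriv L) z + (1 - z) * deriv L z + (n : ℝ) * L z = 0) :
    let f : ℝ → ℝ → ℝ := fun x p =>
      Real.exp (-(x ^ 2 + p ^ 2)) * L (2 * (x ^ 2 + p ^ 2))
    (∀ x p : ℝ,
      x * deriv (fun q => f x q) p - p * deriv (fun y => f y p) x = 0) ∧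
    (∀ x p : ℝ,
      (p ^ 2 + x ^ 2) * f x p -
        (1 / 4) * (deriv (deriv (fun q => f x q)) p +
                   deriv (deriv (fun y => f y p)) x) =
      2 * ((n : ℝ) + 1 / 2) * f x p) := by
  intro f
  have hL1 : Differentiable ℝ L := hL.differentiable (by simp)
  -- first derivative in p
  have hdp : ∀ x p : ℝ, deriv (fun q => f x q) p =
      Real.exp (-(x ^ 2 + p ^ 2)) *
        ((-(2 * p)) * L (2 * (x ^ 2 + p ^ 2)) + (4 * p) * deriv L (2 * (x ^ 2 + p ^ 2))) :=
    fun x p => (aux_d1 L hL1 (x ^ 2) p).deriv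
  -- first derivative in x
  have hdx : ∀ x p : ℝ, deriv (fun y => f y p) x =
      Real.exp (-(p ^ 2 + x ^ 2)) *
        ((-(2 * x)) * L (2 * (p ^ 2 + x ^ 2)) + (4 * x) * deriv L (2 * (p ^ 2 + x ^ 2))) := by
    intro x p
    have heq : (fun y => f y p) =
        (fun t : ℝ => Real.exp (-(p ^ 2 + t ^ 2)) * L (2 * (p ^ 2 + t ^ 2))) := by
      funext t; simp only [f]; rw [add_comm (t ^ 2) (p ^ 2)]
    rw [heq]
    exact (aux_d1 L hL1 (p ^ 2) x).deriv
  -- second derivative in p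
  have hdpp : ∀ x p : ℝ, deriv (deriv (fun q => f x q)) p =
      Real.exp (-(x ^ 2 + p ^ 2)) *
        ((4 * p ^ 2 - 2) * L (2 * (x ^ 2 + p ^ 2)) +
         (4 - 16 * p ^ 2) * deriv L (2 * (x ^ 2 + p ^ 2)) +
         16 * p ^ 2 * deriv (deriv L) (2 * (x ^ 2 + p ^ 2))) := by
    intro x p
    have heq : deriv (fun q => f x q) =
        (fun t : ℝ => Real.exp (-(x ^ 2 + t ^ 2)) *
          ((-(2 * t)) * L (2 * (x ^ 2 + t ^ 2)) + (4 * t) * deriv L (2 * (x ^ 2 + t ^ 2)))) := by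
      funext t; exact (aux_d1 L hL1 (x ^ 2) t).deriv
    rw [heq]
    exact (aux_d2 L hL (x ^ 2) p).deriv
  -- second derivative in x
  have hdxx : ∀ x p : ℝ, deriv (deriv (fun y => f y p)) x =
      Real.exp (-(p ^ 2 + x ^ 2)) *
        ((4 * x ^ 2 - 2) * L (2 * (p ^ 2 + x ^ 2)) +
         (4 - 16 * x ^ 2) * deriv L (2 * (p ^ 2 + x ^ 2)) +
         16 * x ^ 2 * deriv (deriv L) (2 * (p ^ 2 + x ^ 2))) := by
    intro x p
    have heq0 : (fun y => f y p) =
        (fun t : ℝ => Real.exp (-(p ^ 2 + t ^ 2)) * L (2 * (p ^ 2 + t ^ 2))) := by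
      funext t; simp only [f]; rw [add_comm (t ^ 2) (p ^ 2)]
    rw [heq0]
    have heq : deriv (fun t : ℝ => Real.exp (-(p ^ 2 + t ^ 2)) * L (2 * (p ^ 2 + t ^ 2))) =
        (fun t : ℝ => Real.exp (-(p ^ 2 + t ^ 2)) *
          ((-(2 * t)) * L (2 * (p ^ 2 + t ^ 2)) + (4 * t) * deriv L (2 * (p ^ 2 + t ^ 2)))) := by
      funext t; exact (aux_d1 L hL1 (p ^ 2) t).deriv
    rw [heq]
    exact (aux_d2 L hL (p ^ 2) x).deriv
  constructor
  · intro x p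
    rw [hdp, hdx, show p ^ 2 + x ^ 2 = x ^ 2 + p ^ 2 from add_comm _ _]
    ring
  · intro x p
    rw [hdpp, hdxx, show p ^ 2 + x ^ 2 = x ^ 2 + p ^ 2 from add_comm _ _]
    simp only [f]
    linear_combination (-2 * Real.exp (-(x ^ 2 + p ^ 2))) * hode (2 * (x ^ 2 + p ^ 2))
end
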